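/- arXiv:1508.00850 — 2 statements merged into one kernel-verified Lean document; each statement's English description precedes it below -/
import Mathlib

section
/- Lemma on locally frustrated configurations (Lemma 'lemmafacile'): Let G = (V,E) be a k-stable d-E graph with distinguished vertex v of even degree d_v as in the k-stability definition. Let F_v = {f_1,…,f_{d_v}} be the edges incident to v, and define interactions J by J_e = -1 for e ∈ {f_1,…,f_{d_v/2}} and J_e = +1 otherwise. Let σ be the configuration with σ_u = +1 for all u ≠ v (σ_v arbitrary). Then for every connected set A with 1 ≤ |A| ≤ k and A ≠ {v}, one has Δ_A H_J(σ) ≥ 2. -/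
/-!
Each edge leaving `A` contributes `±1` to `Δ_A H_J(σ) / 2`, and `-1` only if it is a frustrated
edge at `v`, i.e. one on which `J` disagrees with `σ_v`; at most `d_v / 2` edges at `v` are of this
kind. If no leaving edge is frustrated, the sum is the size of the edge boundary, positive because
`G` is infinite and connected. Otherwise `v ∈ ∂A ∪ ∂^ext A`, and the sum is at least
`|∂_E A| - d_v > 0` by `k`-stability when `|A| ≥ 2`, while for `A = {x}` with `x ~ v` at most one
edge is frustrated and `|∂_E A| = d_x ≥ 3`.
-/

open Finset

/-- The Hamiltonian increment `Δ_A H_J(σ)`. -/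
def deltaH {V : Type*} [DecidableEq V] (G : SimpleGraph V) [DecidableRel G.Adj]
    [G.LocallyFinite] (J : Sym2 V → ℤ) (σ : V → ℤ) (A : Finset V) : ℤ :=
  2 * ∑ x ∈ A, ∑ y ∈ (G.neighborFinset x).filter (· ∉ A), J s(x, y) * σ x * σ y

/-- The number of edges between `∂A` and `∂^ext A`, i.e. the edge boundary of `A`. -/
def edgeCut {V : Type*} [DecidableEq V] (G : SimpleGraph V) [DecidableRel G.Adj]
    [G.LocallyFinite] (A : Finset V) : ℕ :=
  ∑ x ∈ A, ((G.neighborFinset x).filter (· ∉ A)).card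

/-- `v` belongs to `∂A ∪ ∂^ext A`. -/
def inBdry {V : Type*} (G : SimpleGraph V) (A : Finset V) (v : V) : Prop :=
  (v ∈ A ∧ ∃ u, G.Adj v u ∧ u ∉ A) ∨ (v ∉ A ∧ ∃ u ∈ A, G.Adj v u)

lemma Finset.sum_eq_card_sub_two_mul_card_filter {ι : Type*} {s : Finset ι} {f : ι → ℤ}
    (hf : ∀ i ∈ s, f i = 1 ∨ f i = -1) :
    ∑ i ∈ s, f i = #s - 2 * #(s.filter (f · = -1)) := by
  have : ∀ i ∈ s, f i = 1 - 2 * if f i = -1 then 1 else 0 := by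
    intro i hi; rcases hf i hi with h | h <;> simp [h]
  rw [sum_congr rfl this, sum_sub_distrib, ← mul_sum, sum_boole]
  simp

namespace SimpleGraph

variable {V : Type*}

section Frustration

variable {G : SimpleGraph V} {v : V} {S : Finset V} {J : Sym2 V → ℤ} {σ : V → ℤ}

lemma isUnit_coupling (hJneg : ∀ u ∈ S, J s(v, u) = -1)
    (hJpos : ∀ x y, G.Adj x y → ¬(x = v ∧ y ∈ S) → ¬(y = v ∧ x ∈ S) → J s(x, y) = 1)
    {x y : V} (h : G.Adj x y) : IsUnit (J s(x, y)) := by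
  by_cases hx : x = v ∧ y ∈ S
  · rw [hx.1, hJneg y hx.2]; exact isUnit_one.neg
  by_cases hy : y = v ∧ x ∈ S
  · rw [hy.1, Sym2.eq_swap, hJneg x hy.2]; exact isUnit_one.neg
  rw [hJpos x y h hx hy]; exact isUnit_one

lemma coupling_ne_of_frustrated
    (hJpos : ∀ x y, G.Adj x y → ¬(x = v ∧ y ∈ S) → ¬(y = v ∧ x ∈ S) → J s(x, y) = 1)
    (hσ : ∀ u, u ≠ v → σ u = 1) (hσv : IsUnit (σ v)) {x y : V} (h : G.Adj x y)
    (hw : J s(x, y) * σ x * σ y = -1) :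
    (x = v ∧ J s(v, y) ≠ σ v) ∨ (y = v ∧ J s(v, x) ≠ σ v) := by
  have hσv2 : σ v * σ v = 1 := Int.isUnit_mul_self hσv
  by_cases hx : x = v
  · subst hx
    refine .inl ⟨rfl, fun hJ => ?_⟩
    rw [hJ, hσ y h.ne', hσv2] at hw
    omega
  by_cases hy : y = v
  · subst hy
    refine .inr ⟨rfl, fun hJ => ?_⟩
    rw [Sym2.eq_swap, hJ, hσ x hx, mul_one, hσv2] at hw
    omega
  rw [hJpos x y h (hx ·.1) (hy ·.1), hσ x hx, hσ y hy] at hw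
  omega

end Frustration

variable [DecidableEq V] (G : SimpleGraph V) [G.LocallyFinite]

/-- As a `Finset` of sigma pairs, so that the double sums in `deltaH` and `edgeCut` become single
sums over it (`Finset.sum_sigma`). -/
def boundaryDarts (A : Finset V) : Finset (Σ _ : V, V) :=
  A.sigma fun x => (G.neighborFinset x).filter (· ∉ A)

def frustratedDarts (J : Sym2 V → ℤ) (σ : V → ℤ) (A : Finset V) : Finset (Σ _ : V, V) :=
  (G.boundaryDarts A).filter fun p => J s(p.1, p.2) * σ p.1 * σ p.2 = -1

variable {G}

lemma mem_boundaryDarts {A : Finset V} {p : Σ _ : V, V} :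
    p ∈ G.boundaryDarts A ↔ p.1 ∈ A ∧ G.Adj p.1 p.2 ∧ p.2 ∉ A := by
  simp [boundaryDarts]

lemma mem_frustratedDarts {J : Sym2 V → ℤ} {σ : V → ℤ} {A : Finset V} {p : Σ _ : V, V} :
    p ∈ G.frustratedDarts J σ A ↔
      p ∈ G.boundaryDarts A ∧ J s(p.1, p.2) * σ p.1 * σ p.2 = -1 :=
  mem_filter

lemma frustratedDarts_subset (J : Sym2 V → ℤ) (σ : V → ℤ) (A : Finset V) :
    G.frustratedDarts J σ A ⊆ G.boundaryDarts A :=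
  filter_subset _ _

lemma card_boundaryDarts [DecidableRel G.Adj] (A : Finset V) :
    #(G.boundaryDarts A) = edgeCut G A :=
  card_sigma _ _

lemma edgeCut_pos [DecidableRel G.Adj] [Infinite V] (hG : G.Connected) {A : Finset V}
    (hA : A.Nonempty) : 0 < edgeCut G A := by
  obtain ⟨u, hu⟩ := hA
  obtain ⟨w, hw⟩ := Infinite.exists_notMem_finset A
  obtain ⟨d, -, hd₁, hd₂⟩ :=
    (hG.preconnected u w).some.exists_boundary_dart (A : Set V) hu hw
  rw [← card_boundaryDarts, card_pos]
  exact ⟨⟨d.fst, d.snd⟩, mem_boundaryDarts.2 ⟨hd₁, d.adj, hd₂⟩⟩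

lemma edgeCut_singleton [DecidableRel G.Adj] (x : V) : edgeCut G {x} = G.degree x := by
  rw [edgeCut, sum_singleton, ← card_neighborFinset_eq_degree, filter_true_of_mem]
  exact fun y hy => by simpa using (G.mem_neighborFinset x y |>.1 hy).ne'

lemma deltaH_eq_edgeCut_sub [DecidableRel G.Adj] {J : Sym2 V → ℤ} {σ : V → ℤ}
    (hJ : ∀ x y, G.Adj x y → IsUnit (J s(x, y))) (hσ : ∀ u, IsUnit (σ u)) (A : Finset V) :
    deltaH G J σ A = 2 * (edgeCut G A - 2 * #(G.frustratedDarts J σ A)) := by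
  have hw (p) (hp : p ∈ G.boundaryDarts A) :
      J s(p.1, p.2) * σ p.1 * σ p.2 = 1 ∨ J s(p.1, p.2) * σ p.1 * σ p.2 = -1 :=
    Int.isUnit_iff.1 <| ((hJ _ _ (mem_boundaryDarts.1 hp).2.1).mul (hσ _)).mul (hσ _)
  rw [← card_boundaryDarts, frustratedDarts, ← sum_eq_card_sub_two_mul_card_filter hw,
    deltaH, boundaryDarts, sum_sigma]

lemma inBdry_of_mem_boundaryDarts {A : Finset V} {v : V} {p : Σ _ : V, V}
    (hp : p ∈ G.boundaryDarts A) (hv : p.1 = v ∨ p.2 = v) : inBdry G A v := by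
  obtain ⟨hp1, hadj, hp2⟩ := mem_boundaryDarts.1 hp
  rcases hv with h | h
  · exact .inl ⟨h ▸ hp1, p.2, h ▸ hadj, hp2⟩
  · exact .inr ⟨h ▸ hp2, p.1, hp1, h ▸ hadj.symm⟩

lemma eq_of_mem_boundaryDarts_singleton {x v : V} (hxv : x ≠ v) {p : Σ _ : V, V}
    (hp : p ∈ G.boundaryDarts {x}) (hv : p.1 = v ∨ p.2 = v) : p = ⟨x, v⟩ := by
  have hp1 : p.1 = x := mem_singleton.1 (mem_boundaryDarts.1 hp).1
  exact Sigma.ext hp1 (heq_of_eq (hv.resolve_left (hp1 ▸ hxv)))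

/-- Sending a dart to its endpoint other than `v` is injective on the boundary darts through
`v`, since these all leave `A` at `v` (if `v ∈ A`) or all enter it at `v` (if `v ∉ A`). -/
lemma card_le_of_subset_boundaryDarts {A : Finset V} {T : Finset (Σ _ : V, V)} {v : V}
    {Q : V → Prop} [DecidablePred Q] (hT : T ⊆ G.boundaryDarts A)
    (hTQ : ∀ p ∈ T, (p.1 = v ∧ Q p.2) ∨ (p.2 = v ∧ Q p.1)) :
    #T ≤ #((G.neighborFinset v).filter Q) := by
  refine card_le_card_of_injOn (fun p => if p.1 = v then p.2 else p.1) ?_ ?_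
  · intro p hp
    have hadj := (mem_boundaryDarts.1 (hT hp)).2.1
    simp only [coe_filter, Set.mem_ofPred_eq, mem_neighborFinset]
    rcases hTQ p hp with ⟨h1, hQ⟩ | ⟨h2, hQ⟩
    · simp only [h1, if_true]; exact ⟨h1 ▸ hadj, hQ⟩
    · have : p.1 ≠ v := h2 ▸ hadj.ne
      simp only [this, if_false]; exact ⟨h2 ▸ hadj.symm, hQ⟩
  · have hv (p) (hp : p ∈ T) : (p.1 = v ↔ v ∈ A) ∧ (p.1 = v ∨ p.2 = v) := by
      obtain ⟨h1, -, h2⟩ := mem_boundaryDarts.1 (hT hp)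
      have hinc : p.1 = v ∨ p.2 = v := (hTQ p hp).imp And.left And.left
      exact ⟨⟨fun h => h ▸ h1, fun hvA => hinc.resolve_right fun h => h2 (h ▸ hvA)⟩, hinc⟩
    intro p hp q hq hpq
    obtain ⟨⟨hp1, hp⟩, ⟨hq1, hq⟩⟩ := And.intro (hv p hp) (hv q hq)
    by_cases hvA : v ∈ A
    · simp only [hp1.2 hvA, hq1.2 hvA, if_true] at hpq
      exact Sigma.ext ((hp1.2 hvA).trans (hq1.2 hvA).symm) (heq_of_eq hpq)
    · have hp2 := hp.resolve_left (hvA ∘ hp1.1)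
      have hq2 := hq.resolve_left (hvA ∘ hq1.1)
      simp only [mt hp1.1 hvA, mt hq1.1 hvA, if_false] at hpq
      exact Sigma.ext hpq (heq_of_eq (hp2.trans hq2.symm))

variable {v : V} {S : Finset V} {J : Sym2 V → ℤ} {σ : V → ℤ}

lemma card_filter_coupling_ne_le (hS : S ⊆ G.neighborFinset v) (hScard : 2 * #S = G.degree v)
    (hJneg : ∀ u ∈ S, J s(v, u) = -1)
    (hJpos : ∀ x y, G.Adj x y → ¬(x = v ∧ y ∈ S) → ¬(y = v ∧ x ∈ S) → J s(x, y) = 1)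
    (hσv : σ v = 1 ∨ σ v = -1) :
    #((G.neighborFinset v).filter (J s(v, ·) ≠ σ v)) ≤ #S := by
  rcases hσv with h | h
  · refine card_le_card fun u hu => ?_
    obtain ⟨hu, hJ⟩ := mem_filter.1 hu
    by_contra huS
    exact hJ (h ▸ hJpos v u ((G.mem_neighborFinset v u).1 hu) (huS ·.2)
      (fun h' => ((G.mem_neighborFinset v u).1 hu).ne' h'.1))
  · calc #((G.neighborFinset v).filter (J s(v, ·) ≠ σ v))
        ≤ #(G.neighborFinset v \ S) := card_le_card fun u hu => by
          obtain ⟨hu, hJ⟩ := mem_filter.1 hu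
          exact mem_sdiff.2 ⟨hu, fun huS => hJ (by rw [hJneg u huS, h])⟩
      _ = #S := by rw [card_sdiff_of_subset hS, card_neighborFinset_eq_degree]; omega

end SimpleGraph

open SimpleGraph

theorem frustrated_increment_ge_two_general {V : Type*} [DecidableEq V] [Infinite V]
    (G : SimpleGraph V) [DecidableRel G.Adj] [G.LocallyFinite] (hGconn : G.Connected)
    (k : ℕ) (v : V)
    (hdeg3 : ∀ x, G.Adj v x → 3 ≤ G.degree x)
    (hstable : ∀ A : Finset V, (G.induce (A : Set V)).Connected →
      2 ≤ A.card → A.card ≤ k → inBdry G A v → G.degree v < edgeCut G A)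
    (S : Finset V) (hS : S ⊆ G.neighborFinset v) (hScard : 2 * S.card = G.degree v)
    (J : Sym2 V → ℤ)
    (hJneg : ∀ u ∈ S, J s(v, u) = -1)
    (hJpos : ∀ x y, G.Adj x y → ¬(x = v ∧ y ∈ S) → ¬(y = v ∧ x ∈ S) → J s(x, y) = 1)
    (σ : V → ℤ) (hσ : ∀ u, u ≠ v → σ u = 1) (hσv : σ v = 1 ∨ σ v = -1)
    (A : Finset V) (hA : A.Nonempty) (hconn : (G.induce (A : Set V)).Connected)
    (hcard : A.card ≤ k) (hAne : A ≠ {v}) :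
    2 ≤ deltaH G J σ A := by
  have hσunit (u : V) : IsUnit (σ u) := by
    by_cases hu : u = v
    · exact hu ▸ Int.isUnit_iff.2 hσv
    · exact hσ u hu ▸ isUnit_one
  have hfrus (p) (hp : p ∈ G.frustratedDarts J σ A) :
      (p.1 = v ∧ J s(v, p.2) ≠ σ v) ∨ (p.2 = v ∧ J s(v, p.1) ≠ σ v) :=
    coupling_ne_of_frustrated hJpos hσ (hσunit v)
      (mem_boundaryDarts.1 (mem_frustratedDarts.1 hp).1).2.1 (mem_frustratedDarts.1 hp).2
  have hinc (p) (hp : p ∈ G.frustratedDarts J σ A) : p.1 = v ∨ p.2 = v :=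
    (hfrus p hp).imp And.left And.left
  rw [deltaH_eq_edgeCut_sub (fun _ _ h => isUnit_coupling hJneg hJpos h) hσunit]
  suffices 2 * #(G.frustratedDarts J σ A) < edgeCut G A by omega
  obtain hF | ⟨p, hp⟩ := (G.frustratedDarts J σ A).eq_empty_or_nonempty
  · simpa [hF] using edgeCut_pos hGconn hA
  have hpB := (mem_frustratedDarts.1 hp).1
  obtain h2 | h1 := Nat.lt_or_ge 1 #A
  · have hcut := hstable A hconn h2 hcard (inBdry_of_mem_boundaryDarts hpB (hinc p hp))
    have hFS : #(G.frustratedDarts J σ A) ≤ #S :=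
      (card_le_of_subset_boundaryDarts (frustratedDarts_subset J σ A) hfrus).trans
      (card_filter_coupling_ne_le hS hScard hJneg hJpos hσv)
    omega
  · obtain ⟨x, rfl⟩ := card_eq_one.1 (le_antisymm h1 hA.card_pos)
    have hxv : x ≠ v := fun h => hAne (h ▸ rfl)
    have hFx (q) (hq : q ∈ G.frustratedDarts J σ {x}) : q = ⟨x, v⟩ :=
      eq_of_mem_boundaryDarts_singleton hxv (mem_frustratedDarts.1 hq).1 (hinc q hq)
    have hF1 := card_le_one.2 fun q hq r hr => (hFx q hq).trans (hFx r hr).symm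
    have hdeg := hdeg3 x ((hFx p hp ▸ (mem_boundaryDarts.1 hpB).2.1)).symm
    rw [edgeCut_singleton]
    omega

/-- Lemma on locally frustrated configurations: on an infinite connected `k`-stable
graph with distinguished vertex `v` of even degree, taking interactions equal to `-1`
on exactly half of the edges incident to `v` (a set `S` of neighbors) and `+1`
elsewhere, and spins `+1` everywhere off `v`, every connected set `A` with
`1 ≤ |A| ≤ k` and `A ≠ {v}` satisfies `Δ_A H_J(σ) ≥ 2`. -/
theorem frustrated_increment_ge_two {V : Type*} [DecidableEq V] [Infinite V]
    (G : SimpleGraph V) [DecidableRel G.Adj] [G.LocallyFinite] (hGconn : G.Connected)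
    (k : ℕ) (v : V)
    (hEven : Even (G.degree v))
    (hdeg3 : ∀ x, G.Adj v x → 3 ≤ G.degree x)
    (hstable : ∀ A : Finset V, (G.induce (A : Set V)).Connected →
      2 ≤ A.card → A.card ≤ k → inBdry G A v → G.degree v < edgeCut G A)
    (S : Finset V) (hS : S ⊆ G.neighborFinset v) (hScard : 2 * S.card = G.degree v)
    (J : Sym2 V → ℤ)
    (hJneg : ∀ u ∈ S, J s(v, u) = -1)
    (hJpos : ∀ x y, G.Adj x y → ¬(x = v ∧ y ∈ S) → ¬(y = v ∧ x ∈ S) → J s(x, y) = 1)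
    (σ : V → ℤ) (hσ : ∀ u, u ≠ v → σ u = 1) (hσv : σ v = 1 ∨ σ v = -1)
    (A : Finset V) (hA : A.Nonempty) (hconn : (G.induce (A : Set V)).Connected)
    (hcard : A.card ≤ k) (hAne : A ≠ {v}) :
    2 ≤ deltaH G J σ A :=
  frustrated_increment_ge_two_general G hGconn k v hdeg3 hstable S hS hScard J hJneg hJpos σ hσ hσv
    A hA hconn hcard hAne
end

section
/- The cubic lattice 𝕃_d = (ℤ^d, 𝔼_d) with d ≥ 2 is k-stable for every k ∈ ℕ: for any vertex v (which has even degree 2d), every neighbor of v has degree 2d ≥ 3, and every connected set A with 2 ≤ |A| ≤ k and v ∈ ∂A ∪ ∂^ext A has strictly more than 2d edges between ∂A and ∂^ext A. -/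
open Finset

/-- The cubic lattice `𝕃_d = (ℤ^d, 𝔼_d)`. -/
def latticeGraph (d : ℕ) : SimpleGraph (Fin d → ℤ) where
  Adj x y := (∑ i, |x i - y i|) = 1
  symm := by
    constructor
    intro x y h
    simpa only [abs_sub_comm] using h
  loopless := by
    constructor
    intro x h
    simp at h

/-- The edge boundary count of a finite `A ⊆ ℤ^d`: edges from `A` to its complement,
each counted once. -/
def latticeCutCount (d : ℕ) (A : Finset (Fin d → ℤ)) : ℕ :=
  ∑ x ∈ A, ∑ i : Fin d,
    ((if x + Pi.single i 1 ∉ A then 1 else 0) + (if x - Pi.single i 1 ∉ A then 1 else 0))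

/-- `v` belongs to `∂A ∪ ∂^ext A` in `𝕃_d`. -/
def latticeInBdry (d : ℕ) (A : Finset (Fin d → ℤ)) (v : Fin d → ℤ) : Prop :=
  (v ∈ A ∧ ∃ u, (latticeGraph d).Adj v u ∧ u ∉ A) ∨
  (v ∉ A ∧ ∃ u ∈ A, (latticeGraph d).Adj v u)

/-!
Every vertex `v` of `𝕃_d` has exactly the `2d` neighbours `v ± eᵢ`. For the edge boundary of a
finite `A`, fix a direction `i` and cut `A` into lines parallel to `eᵢ`: each line has a last point
in direction `+eᵢ` and one in direction `-eᵢ`, each the foot of a boundary edge, so the boundary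
has at least `2 ∑ᵢ |πᵢ A|` edges, where `πᵢ` forgets the `i`-th coordinate. Every `πᵢ A` is
nonempty, and if two points of `A` differ in coordinate `j`, then `|πᵢ A| ≥ 2` for any `i ≠ j`;
hence `∑ᵢ |πᵢ A| > d` once `d ≥ 2` and `|A| ≥ 2`.
-/

lemma exists_eq_single_of_sum_abs_eq_one {ι : Type*} [Fintype ι] [DecidableEq ι] {w : ι → ℤ}
    (hw : ∑ j, |w j| = 1) : ∃ (i : ι) (u : ℤˣ), w = Pi.single i (u : ℤ) := by
  obtain ⟨i, hi⟩ : ∃ i, w i ≠ 0 := by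
    by_contra! h
    simp [h] at hw
  have hsplit := Finset.add_sum_erase univ (fun j => |w j|) (mem_univ i)
  have hrest_nonneg : 0 ≤ ∑ j ∈ univ.erase i, |w j| := sum_nonneg fun j _ => abs_nonneg _
  have hwi : |w i| = 1 := by
    have := Int.one_le_abs hi
    omega
  have hrest : ∑ j ∈ univ.erase i, |w j| = 0 := by omega
  refine ⟨i, (Int.isUnit_iff_abs_eq.mpr hwi).unit, ?_⟩
  ext j
  rcases eq_or_ne j i with rfl | hj
  · simp
  · rw [Pi.single_eq_of_ne hj]
    exact abs_eq_zero.mp <|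
      (sum_eq_zero_iff_of_nonneg fun j _ => abs_nonneg (w j)).mp hrest j (by simp [hj])

lemma latticeGraph_adj_iff {d : ℕ} {v y : Fin d → ℤ} :
    (latticeGraph d).Adj v y ↔ ∃ (i : Fin d) (u : ℤˣ), y = v + Pi.single i (u : ℤ) := by
  change ∑ j, |v j - y j| = 1 ↔ _
  constructor
  · intro h
    obtain ⟨i, u, hu⟩ := exists_eq_single_of_sum_abs_eq_one (w := y - v)
      (by simpa only [Pi.sub_apply, abs_sub_comm] using h)
    exact ⟨i, u, by rw [← hu, add_sub_cancel]⟩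
  · rintro ⟨i, u, rfl⟩
    simp [Pi.single_apply, apply_ite abs, Int.isUnit_iff_abs_eq.mp u.isUnit]

lemma latticeGraph_ncard_adj (d : ℕ) (v : Fin d → ℤ) :
    Set.ncard {y | (latticeGraph d).Adj v y} = 2 * d := by
  have hinj : Function.Injective fun p : Fin d × ℤˣ => v + Pi.single p.1 (p.2 : ℤ) := by
    rintro ⟨i, u⟩ ⟨j, w⟩ h
    simp only [add_right_inj] at h
    obtain rfl : i = j := by
      by_contra hij
      simpa [hij] using congrFun h i
    exact Prod.ext rfl (Units.ext (Pi.single_injective i h))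
  have hrange : {y | (latticeGraph d).Adj v y} =
      Set.range fun p : Fin d × ℤˣ => v + Pi.single p.1 (p.2 : ℤ) := by
    ext y
    simp [latticeGraph_adj_iff, eq_comm]
  rw [hrange, Set.ncard_range_of_injective hinj, Nat.card_eq_fintype_card, Fintype.card_prod,
    Fintype.card_units_int, Fintype.card_fin, mul_comm]

lemma update_add_single_self {ι : Type*} [DecidableEq ι] (x : ι → ℤ) (i : ι) (c : ℤ) :
    Function.update (x + Pi.single i c) i 0 = Function.update x i 0 := by
  funext j
  by_cases hj : j = i <;> simp [hj]

section LineProjection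

variable {ι : Type*} [Fintype ι] [DecidableEq ι]

/-- On each line of `A` parallel to `eᵢ`, the point furthest in direction `c` leaves `A`. -/
lemma card_image_update_le_card_filter (A : Finset (ι → ℤ)) (i : ι) {c : ℤ} (hc : c ≠ 0) :
    #(A.image (Function.update · i 0)) ≤ #{x ∈ A | x + Pi.single i c ∉ A} := by
  refine card_le_card_of_surjOn (Function.update · i 0) ?_
  intro b hb
  obtain ⟨x₀, hx₀, rfl⟩ := mem_image.mp hb
  obtain ⟨x, hx, hmax⟩ :=
    (A.filter (Function.update · i 0 = Function.update x₀ i 0)).exists_max_image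
      (fun x => c * x i) ⟨x₀, mem_filter.mpr ⟨hx₀, rfl⟩⟩
  rw [mem_filter] at hx
  refine ⟨x, mem_filter.mpr ⟨hx.1, fun hnext => ?_⟩, hx.2⟩
  have := hmax _ (mem_filter.mpr ⟨hnext, by rw [update_add_single_self, hx.2]⟩)
  simp only [Pi.add_apply, Pi.single_eq_same, mul_add] at this
  exact (mul_self_pos.mpr hc).not_ge (by linarith)

lemma one_lt_card_image_update {A : Finset (ι → ℤ)} {x y : ι → ℤ} (hx : x ∈ A) (hy : y ∈ A)
    {i j : ι} (hxy : x j ≠ y j) (hij : i ≠ j) :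
    1 < #(A.image (Function.update · i 0)) :=
  one_lt_card.mpr ⟨_, mem_image_of_mem _ hx, _, mem_image_of_mem _ hy, fun h => hxy <| by
    simpa [Function.update_of_ne hij.symm] using congrFun h j⟩

lemma card_lt_sum_card_image_update [Nontrivial ι] {A : Finset (ι → ℤ)}
    (hA : 1 < #A) : Fintype.card ι < ∑ i, #(A.image (Function.update · i 0)) := by
  obtain ⟨x, hx, y, hy, hxy⟩ := one_lt_card.mp hA
  obtain ⟨j, hj⟩ := Function.ne_iff.mp hxy
  obtain ⟨i, hij⟩ := exists_ne j
  have hpos (i : ι) : 1 ≤ #(A.image (Function.update · i 0)) :=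
    card_pos.mpr ⟨_, mem_image_of_mem _ hx⟩
  simpa using sum_lt_sum (fun i _ => hpos i) ⟨i, mem_univ i, one_lt_card_image_update hx hy hj hij⟩

end LineProjection

lemma latticeCutCount_eq_sum (d : ℕ) (A : Finset (Fin d → ℤ)) :
    latticeCutCount d A =
      ∑ i, (#{x ∈ A | x + Pi.single i 1 ∉ A} + #{x ∈ A | x + Pi.single i (-1) ∉ A}) := by
  simp only [latticeCutCount, card_filter, Pi.single_neg, ← sub_eq_add_neg]
  rw [sum_comm]
  simp only [sum_add_distrib]

lemma two_mul_lt_latticeCutCount {d : ℕ} (hd : 2 ≤ d) {A : Finset (Fin d → ℤ)} (hA : 2 ≤ #A) :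
    2 * d < latticeCutCount d A := by
  have : Nontrivial (Fin d) := Fin.nontrivial_iff_two_le.mpr hd
  calc 2 * d < 2 * ∑ i, #(A.image (Function.update · i 0)) := by
        simpa using card_lt_sum_card_image_update (A := A) hA
    _ = ∑ i, (#(A.image (Function.update · i 0)) + #(A.image (Function.update · i 0))) := by
        rw [mul_sum]; simp only [two_mul]
    _ ≤ latticeCutCount d A := by
        rw [latticeCutCount_eq_sum]
        exact sum_le_sum fun i _ => add_le_add
          (card_image_update_le_card_filter A i one_ne_zero)
          (card_image_update_le_card_filter A i (neg_ne_zero.mpr one_ne_zero))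

/-- The cubic lattice `𝕃_d` with `d ≥ 2` is `k`-stable for every `k` (at every vertex
`v`): `v` has even degree `2d`, every neighbor of `v` has degree `2d ≥ 3`, and every
connected set `A` with `2 ≤ |A| ≤ k` and `v ∈ ∂A ∪ ∂^ext A` has edge boundary strictly
larger than `2d`. -/
theorem lattice_kStable (d k : ℕ) (hd : 2 ≤ d) (v : Fin d → ℤ) :
    Set.ncard {y | (latticeGraph d).Adj v y} = 2 * d ∧
    Even (Set.ncard {y | (latticeGraph d).Adj v y}) ∧
    (∀ x, (latticeGraph d).Adj v x → 3 ≤ Set.ncard {y | (latticeGraph d).Adj x y}) ∧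
    ∀ A : Finset (Fin d → ℤ), ((latticeGraph d).induce (A : Set (Fin d → ℤ))).Connected →
      2 ≤ A.card → A.card ≤ k → latticeInBdry d A v →
      2 * d < latticeCutCount d A := by
  refine ⟨latticeGraph_ncard_adj d v, ?_, fun x _ => ?_, fun A _ hA _ _ => ?_⟩
  · rw [latticeGraph_ncard_adj]
    exact even_two_mul d
  · rw [latticeGraph_ncard_adj]
    omega
  · exact two_mul_lt_latticeCutCount hd hA
end
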